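/- A Hausdorff space X is ultraparacompact if and only if X is ultranormal and paracompact. -/

import Mathlib

/-! A clopen partition refining the cover `{Rᶜ, Sᶜ}` separates `R` from `S` by the union of its
pieces that meet `R`, and it is itself a locally finite open refinement. Conversely, an ultranormal
space is normal, so a locally finite open refinement of a cover shrinks to a closed cover, and
clopen sets fit between the shrunk and the original sets. Well-ordering the index set and removing
from each clopen set the earlier ones gives a clopen partition: local finiteness keeps the union of
the earlier sets closed. -/

/-- A partition of the space `X` into (nonempty, pairwise disjoint) clopen sets. -/
def IsClopenPartition (X : Type*) [TopologicalSpace X] (P : Set (Set X)) : Prop :=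
  (∀ S ∈ P, IsClopen S) ∧ (∀ S ∈ P, S.Nonempty) ∧
    (∀ S ∈ P, ∀ T ∈ P, S ≠ T → S ∩ T = ∅) ∧ ⋃₀ P = Set.univ

/-- A space is ultraparacompact if every open cover has a refinement that is a
partition of the space into clopen sets. -/
def Ultraparacompact (X : Type*) [TopologicalSpace X] : Prop :=
  ∀ 𝒰 : Set (Set X), (∀ U ∈ 𝒰, IsOpen U) → ⋃₀ 𝒰 = Set.univ →
    ∃ P : Set (Set X), IsClopenPartition X P ∧ ∀ S ∈ P, ∃ U ∈ 𝒰, S ⊆ U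

/-- A space is ultranormal if any two disjoint closed sets are separated by a clopen set. -/
def Ultranormal (X : Type*) [TopologicalSpace X] : Prop :=
  ∀ R S : Set X, IsClosed R → IsClosed S → Disjoint R S →
    ∃ C : Set X, IsClopen C ∧ R ⊆ C ∧ S ∩ C = ∅

/-- A space is zero-dimensional if the clopen sets form a basis for the topology. -/
def ZeroDimensional (X : Type*) [TopologicalSpace X] : Prop :=
  TopologicalSpace.IsTopologicalBasis {s : Set X | IsClopen s}

open Set Function

namespace IsClopenPartition

variable {X : Type*} [TopologicalSpace X] {P : Set (Set X)}

theorem exists_mem (hP : IsClopenPartition X P) (x : X) : ∃ T ∈ P, x ∈ T :=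
  mem_sUnion.1 (hP.2.2.2 ▸ mem_univ x)

theorem eq_of_mem_of_mem (hP : IsClopenPartition X P) {S T : Set X} (hS : S ∈ P) (hT : T ∈ P)
    {x : X} (hxS : x ∈ S) (hxT : x ∈ T) : S = T := by
  by_contra hST
  exact (hP.2.2.1 S hS T hT hST).subset ⟨hxS, hxT⟩

theorem isClopen_sUnion (hP : IsClopenPartition X P) {Q : Set (Set X)} (hQ : Q ⊆ P) :
    IsClopen (⋃₀ Q) := by
  have hcompl : (⋃₀ Q)ᶜ = ⋃₀ (P \ Q) := by
    ext x
    obtain ⟨T, hT, hxT⟩ := hP.exists_mem x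
    constructor
    · intro hx
      exact ⟨T, ⟨hT, fun hTQ => hx ⟨T, hTQ, hxT⟩⟩, hxT⟩
    · rintro ⟨S, ⟨hS, hSQ⟩, hxS⟩ ⟨S', hS'Q, hxS'⟩
      exact hSQ (hP.eq_of_mem_of_mem hS (hQ hS'Q) hxS hxS' ▸ hS'Q)
  refine ⟨?_, isOpen_sUnion fun T hT => (hP.1 T (hQ hT)).isOpen⟩
  rw [← isOpen_compl_iff, hcompl]
  exact isOpen_sUnion fun T hT => (hP.1 T hT.1).isOpen

theorem locallyFinite (hP : IsClopenPartition X P) : LocallyFinite fun T : P => (T : Set X) := by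
  intro x
  obtain ⟨T₀, hT₀, hxT₀⟩ := hP.exists_mem x
  refine ⟨T₀, (hP.1 T₀ hT₀).isOpen.mem_nhds hxT₀, (finite_singleton ⟨T₀, hT₀⟩).subset ?_⟩
  rintro ⟨T, hT⟩ ⟨y, hyT, hyT₀⟩
  exact Subtype.ext (hP.eq_of_mem_of_mem hT hT₀ hyT hyT₀)

end IsClopenPartition

section

variable {X ι : Type*} [TopologicalSpace X]

theorem isClopenPartition_range_diff_empty {D : ι → Set X} (hD : ∀ i, IsClopen (D i))
    (hdisj : Pairwise (Disjoint on D)) (hcov : ⋃ i, D i = univ) :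
    IsClopenPartition X (range D \ {∅}) := by
  refine ⟨?_, ?_, ?_, ?_⟩
  · rintro _ ⟨⟨i, rfl⟩, -⟩
    exact hD i
  · rintro S ⟨-, hS⟩
    exact nonempty_iff_ne_empty.2 hS
  · rintro _ ⟨⟨i, rfl⟩, -⟩ _ ⟨⟨j, rfl⟩, -⟩ hij
    exact disjoint_iff_inter_eq_empty.1 (hdisj fun h => hij (congrArg D h))
  · rw [sUnion_sdiff_singleton_empty, sUnion_range, hcov]

theorem LocallyFinite.exists_pairwise_disjoint_isClopen_subset [LinearOrder ι] [WellFoundedLT ι]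
    {C : ι → Set X} (hC : ∀ i, IsClopen (C i)) (hCf : LocallyFinite C) :
    ∃ D : ι → Set X, (∀ i, IsClopen (D i)) ∧ Pairwise (Disjoint on D) ∧
      ⋃ i, D i = ⋃ i, C i ∧ ∀ i, D i ⊆ C i := by
  refine ⟨fun i => C i \ ⋃ j ∈ Iio i, C j, fun i => (hC i).diff ⟨?_, ?_⟩, ?_, ?_,
    fun i => sdiff_subset⟩
  · rw [biUnion_eq_iUnion]
    exact (hCf.comp_injective Subtype.val_injective).isClosed_iUnion fun j => (hC j).isClosed
  · exact isOpen_biUnion fun j _ => (hC j).isOpen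
  · refine (pairwise_disjoint_on _).2 fun i j hij => ?_
    exact disjoint_left.2 fun x hxi hxj => hxj.2 (mem_biUnion hij hxi.1)
  · refine (iUnion_mono fun i => sdiff_subset).antisymm fun x hx => ?_
    obtain ⟨i, hxi, hmin⟩ := wellFounded_lt.has_min {i | x ∈ C i} (mem_iUnion.1 hx)
    refine mem_iUnion.2 ⟨i, hxi, fun hlt => ?_⟩
    obtain ⟨j, hji, hxj⟩ := mem_iUnion₂.1 hlt
    exact hmin j hxj hji

theorem Ultranormal.normalSpace (h : Ultranormal X) : NormalSpace X := by
  refine ⟨fun R S hR hS hRS => ?_⟩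
  obtain ⟨C, hC, hRC, hSC⟩ := h R S hR hS hRS
  exact ⟨C, Cᶜ, hC.isOpen, hC.compl.isOpen, hRC,
    fun x hxS hxC => (hSC.subset ⟨hxS, hxC⟩ : x ∈ (∅ : Set X)), disjoint_compl_right⟩

theorem Ultranormal.exists_isClopen_between (h : Ultranormal X) {F U : Set X} (hF : IsClosed F)
    (hU : IsOpen U) (hFU : F ⊆ U) : ∃ C, IsClopen C ∧ F ⊆ C ∧ C ⊆ U := by
  obtain ⟨C, hC, hFC, hUC⟩ := h F Uᶜ hF hU.isClosed_compl (disjoint_compl_right_iff_subset.2 hFU)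
  refine ⟨C, hC, hFC, fun x hxC => by_contra fun hxU => ?_⟩
  exact hUC.subset ⟨hxU, hxC⟩

theorem Ultranormal.exists_locallyFinite_isClopen_refinement [ParacompactSpace X]
    (h : Ultranormal X) {u : ι → Set X} (hu : ∀ i, IsOpen (u i))
    (hcov : ⋃ i, u i = univ) :
    ∃ C : ι → Set X, (∀ i, IsClopen (C i)) ∧ LocallyFinite C ∧ ⋃ i, C i = univ ∧
      ∀ i, C i ⊆ u i := by
  have := h.normalSpace
  obtain ⟨v, hv, hvcov, hvf, hvu⟩ := precise_refinement u hu hcov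
  obtain ⟨F, hFcov, hF, hFv⟩ := exists_iUnion_eq_closed_subset hv hvf.point_finite hvcov
  choose C hC hFC hCv using fun i => h.exists_isClopen_between (hF i) (hv i) (hFv i)
  refine ⟨C, hC, hvf.subset hCv, ?_, fun i => (hCv i).trans (hvu i)⟩
  exact univ_subset_iff.1 (hFcov ▸ iUnion_mono hFC)

theorem Ultranormal.ultraparacompact [ParacompactSpace X] (h : Ultranormal X) :
    Ultraparacompact X := by
  intro 𝒰 h𝒰 hcov
  obtain ⟨C, hC, hCf, hCcov, hC𝒰⟩ := h.exists_locallyFinite_isClopen_refinement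
    (u := fun U : 𝒰 => (U : Set X)) (fun U => h𝒰 U U.2) (by rwa [← sUnion_eq_iUnion])
  obtain ⟨_, _⟩ := exists_wellFoundedLT 𝒰
  obtain ⟨D, hD, hDdisj, hDcov, hDC⟩ := hCf.exists_pairwise_disjoint_isClopen_subset hC
  refine ⟨range D \ {∅}, isClopenPartition_range_diff_empty hD hDdisj (hDcov.trans hCcov), ?_⟩
  rintro _ ⟨⟨U, rfl⟩, -⟩
  exact ⟨U, U.2, (hDC U).trans (hC𝒰 U)⟩

theorem Ultraparacompact.ultranormal (h : Ultraparacompact X) : Ultranormal X := by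
  intro R S hR hS hRS
  obtain ⟨P, hP, hPref⟩ := h {Rᶜ, Sᶜ} (by rintro U (rfl | rfl) <;> simpa)
    (by rw [sUnion_pair, ← compl_inter, disjoint_iff_inter_eq_empty.1 hRS, compl_empty])
  refine ⟨⋃₀ {T ∈ P | ¬T ⊆ Rᶜ}, hP.isClopen_sUnion fun T hT => hT.1, fun x hxR => ?_, ?_⟩
  · obtain ⟨T, hT, hxT⟩ := hP.exists_mem x
    exact ⟨T, ⟨hT, fun hTR => hTR hxT hxR⟩, hxT⟩
  · refine eq_empty_of_forall_notMem fun x ⟨hxS, T, ⟨hT, hTR⟩, hxT⟩ => ?_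
    obtain ⟨U, hU | hU, hTU⟩ := hPref T hT
    · exact hTR (hU ▸ hTU)
    · exact (hU ▸ hTU) hxT hxS

theorem Ultraparacompact.paracompactSpace (h : Ultraparacompact X) : ParacompactSpace X := by
  refine ⟨fun α s hs hcov => ?_⟩
  obtain ⟨P, hP, hPref⟩ := h (range s) (forall_mem_range.2 hs) (by rwa [sUnion_range])
  refine ⟨P, Subtype.val, fun T => (hP.1 T T.2).isOpen, ?_, hP.locallyFinite, ?_⟩
  · rw [← sUnion_eq_iUnion, hP.2.2.2]
  · rintro ⟨T, hT⟩
    obtain ⟨_, ⟨a, rfl⟩, hTa⟩ := hPref T hT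
    exact ⟨a, hTa⟩

end

theorem ultraparacompact_iff_ultranormal_paracompact_general (X : Type*) [TopologicalSpace X] :
    Ultraparacompact X ↔ Ultranormal X ∧ ParacompactSpace X :=
  ⟨fun h => ⟨h.ultranormal, h.paracompactSpace⟩, fun ⟨h, _⟩ => h.ultraparacompact⟩

/-- A Hausdorff space is ultraparacompact iff it is ultranormal and paracompact. -/
theorem ultraparacompact_iff_ultranormal_paracompact (X : Type*) [TopologicalSpace X]
    [T2Space X] :
    Ultraparacompact X ↔ Ultranormal X ∧ ParacompactSpace X :=
  ultraparacompact_iff_ultranormal_paracompact_general X
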